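/- Let L ≥ 1, ρ > 0, a ∈ ℂ^L, and let h₁, h₂ ∈ ℂ^L satisfy ‖h₁‖ = ‖h₂‖ and |⟨h₁,a⟩| ≥ |⟨h₂,a⟩|. Then inf_{α ∈ ℂ} ( ρ‖α h₁ − a‖² + |α|² ) ≤ inf_{α ∈ ℂ} ( ρ‖α h₂ − a‖² + |α|² ), and consequently sup_{α ∈ ℂ} log⁺( ρ / (ρ‖α h₁ − a‖² + |α|²) ) ≥ sup_{α ∈ ℂ} log⁺( ρ / (ρ‖α h₂ − a‖² + |α|²) ). -/

import Mathlib

/-!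
Expanding the square, `effNoise ρ h a α = (ρ‖h‖² + 1)|α|² − 2ρ Re(α⟨h,a⟩) + ρ‖a‖²` depends on `h`
only through `‖h‖` and `⟨h,a⟩`. Given `α`, the `β` with `|β| = |α|` that turns `β⟨h₁,a⟩` into the
positive real `|α||⟨h₁,a⟩| ≥ Re(α⟨h₂,a⟩)` therefore satisfies `Q_{h₁}(β) ≤ Q_{h₂}(α)`. This gives the
comparison of infima, and that of the rates because `x ↦ log⁺(ρ/x)` is antitone on `(0, ∞)` and,
by Cauchy–Schwarz, `Q_{h₁} ≥ ρ‖a‖²/(ρ‖h₁‖² + 1)`, which is positive unless `a = 0`; for `a = 0`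
the two energies coincide.
-/

open Complex Finset

/-- The effective-noise energy `Q(α) = ρ‖αh − a‖² + |α|²`. -/
noncomputable def effNoise {L : ℕ} (ρ : ℝ) (h a : Fin L → ℂ) (α : ℂ) : ℝ :=
  ρ * ∑ ℓ, ‖α * h ℓ - a ℓ‖ ^ 2 + ‖α‖ ^ 2

open ComplexConjugate

lemma norm_mul_sub_sq (α x y : ℂ) :
    ‖α * x - y‖ ^ 2 = ‖α‖ ^ 2 * ‖x‖ ^ 2 - 2 * (α * (x * conj y)).re + ‖y‖ ^ 2 := by
  simp only [Complex.sq_norm, Complex.normSq_sub, Complex.normSq_mul, mul_assoc]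
  ring

lemma effNoise_eq {L : ℕ} (ρ : ℝ) (h a : Fin L → ℂ) (α : ℂ) :
    effNoise ρ h a α = ρ * (‖α‖ ^ 2 * ∑ ℓ, ‖h ℓ‖ ^ 2
      - 2 * (α * ∑ ℓ, h ℓ * conj (a ℓ)).re + ∑ ℓ, ‖a ℓ‖ ^ 2) + ‖α‖ ^ 2 := by
  simp only [effNoise, norm_mul_sub_sq, sum_add_distrib, sum_sub_distrib, ← mul_sum,
    ← re_sum]

lemma sq_norm_sum_mul_conj_le {L : ℕ} (h a : Fin L → ℂ) :
    ‖∑ ℓ, h ℓ * conj (a ℓ)‖ ^ 2 ≤ (∑ ℓ, ‖h ℓ‖ ^ 2) * ∑ ℓ, ‖a ℓ‖ ^ 2 := by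
  have hsum : ‖∑ ℓ, h ℓ * conj (a ℓ)‖ ≤ ∑ ℓ, ‖h ℓ‖ * ‖a ℓ‖ :=
    (norm_sum_le _ _).trans_eq <| sum_congr rfl fun ℓ _ => by rw [norm_mul, RCLike.norm_conj]
  calc ‖∑ ℓ, h ℓ * conj (a ℓ)‖ ^ 2 ≤ (∑ ℓ, ‖h ℓ‖ * ‖a ℓ‖) ^ 2 := by gcongr
    _ ≤ _ := sum_mul_sq_le_sq_mul_sq _ _ _

lemma div_le_effNoise {L : ℕ} {ρ : ℝ} (hρ : 0 ≤ ρ) (h a : Fin L → ℂ) (α : ℂ) :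
    ρ * (∑ ℓ, ‖a ℓ‖ ^ 2) / (ρ * ∑ ℓ, ‖h ℓ‖ ^ 2 + 1) ≤ effNoise ρ h a α := by
  set H := ∑ ℓ, ‖h ℓ‖ ^ 2
  set A := ∑ ℓ, ‖a ℓ‖ ^ 2
  set S := ∑ ℓ, h ℓ * conj (a ℓ)
  have hH : 0 ≤ H := sum_nonneg fun _ _ => by positivity
  have hre : (α * S).re ≤ ‖α‖ * ‖S‖ := (re_le_norm _).trans_eq (norm_mul _ _)
  have hCS : ‖S‖ ^ 2 ≤ H * A := sq_norm_sum_mul_conj_le h a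
  rw [effNoise_eq, div_le_iff₀ (by positivity)]
  -- complete the square in `‖α‖`, then bound `‖S‖²` by Cauchy–Schwarz
  nlinarith [sq_nonneg ((ρ * H + 1) * ‖α‖ - ρ * ‖S‖),
    mul_le_mul_of_nonneg_left hCS (sq_nonneg ρ),
    mul_le_mul_of_nonneg_left hre (by positivity : 0 ≤ 2 * ρ * (ρ * H + 1))]

lemma exists_norm_eq_mul_eq_ofReal {r : ℝ} (hr : 0 ≤ r) (z : ℂ) :
    ∃ β : ℂ, ‖β‖ = r ∧ β * z = ↑(r * ‖z‖) := by
  refine ⟨r * exp (↑(-arg z) * I), ?_, ?_⟩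
  · rw [norm_mul, norm_exp_ofReal_mul_I, norm_real, Real.norm_of_nonneg hr, mul_one]
  · calc (r : ℂ) * exp (↑(-arg z) * I) * z
        = r * exp (↑(-arg z) * I) * (‖z‖ * exp (arg z * I)) := by rw [norm_mul_exp_arg_mul_I]
      _ = r * ‖z‖ * exp (-arg z * I + arg z * I) := by rw [exp_add, ofReal_neg]; ring
      _ = ↑(r * ‖z‖) := by rw [neg_mul, neg_add_cancel, exp_zero, mul_one, ofReal_mul]

lemma effNoise_le_effNoise_of_re_le {L : ℕ} {ρ : ℝ} (hρ : 0 ≤ ρ) {h₁ h₂ a : Fin L → ℂ} {α β : ℂ}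
    (hnorm : ∑ ℓ, ‖h₁ ℓ‖ ^ 2 = ∑ ℓ, ‖h₂ ℓ‖ ^ 2) (hβ : ‖β‖ = ‖α‖)
    (hre : (α * ∑ ℓ, h₂ ℓ * conj (a ℓ)).re ≤ (β * ∑ ℓ, h₁ ℓ * conj (a ℓ)).re) :
    effNoise ρ h₁ a β ≤ effNoise ρ h₂ a α := by
  rw [effNoise_eq, effNoise_eq, hnorm, hβ]
  gcongr

lemma exists_effNoise_le {L : ℕ} {ρ : ℝ} (hρ : 0 ≤ ρ) {h₁ h₂ a : Fin L → ℂ}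
    (hnorm : ∑ ℓ, ‖h₁ ℓ‖ ^ 2 = ∑ ℓ, ‖h₂ ℓ‖ ^ 2)
    (hip : ‖∑ ℓ, h₂ ℓ * conj (a ℓ)‖ ≤ ‖∑ ℓ, h₁ ℓ * conj (a ℓ)‖) (α : ℂ) :
    ∃ β, effNoise ρ h₁ a β ≤ effNoise ρ h₂ a α := by
  obtain ⟨β, hβ, hβS⟩ := exists_norm_eq_mul_eq_ofReal (norm_nonneg α) (∑ ℓ, h₁ ℓ * conj (a ℓ))
  refine ⟨β, effNoise_le_effNoise_of_re_le hρ hnorm hβ ?_⟩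
  calc (α * ∑ ℓ, h₂ ℓ * conj (a ℓ)).re ≤ ‖α‖ * ‖∑ ℓ, h₂ ℓ * conj (a ℓ)‖ :=
        (re_le_norm _).trans_eq (norm_mul _ _)
    _ ≤ ‖α‖ * ‖∑ ℓ, h₁ ℓ * conj (a ℓ)‖ := by gcongr
    _ = (β * ∑ ℓ, h₁ ℓ * conj (a ℓ)).re := by rw [hβS, ofReal_re]

lemma antitoneOn_max_log_div {ρ : ℝ} (hρ : 0 < ρ) :
    AntitoneOn (fun x => max (Real.log (ρ / x)) 0) (Set.Ioi 0) := fun _ _ _ hy hxy => by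
  dsimp only
  gcongr
  exact div_pos hρ hy

lemma ciSup_comp_le_ciSup_comp_of_antitoneOn {ι κ : Type*} [Nonempty ι] {φ : ℝ → ℝ} {c : ℝ}
    {f : κ → ℝ} {g : ι → ℝ} (hφ : AntitoneOn φ (Set.Ici c)) (hf : ∀ k, c ≤ f k)
    (h : ∀ i, ∃ k, f k ≤ g i) : ⨆ i, φ (g i) ≤ ⨆ k, φ (f k) := by
  refine ciSup_mono_of_forall_exists ⟨φ c, Set.forall_mem_range.2 fun k =>
    hφ Set.self_mem_Ici (hf k) (hf k)⟩ fun i => ?_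
  obtain ⟨k, hk⟩ := h i
  exact ⟨k, hφ (hf k) ((hf k).trans hk) hk⟩

theorem rate_mono_of_inner_ge_general (L : ℕ) (ρ : ℝ) (hρ : 0 < ρ)
    (h₁ h₂ a : Fin L → ℂ)
    (hnorm : ∑ ℓ, ‖h₁ ℓ‖ ^ 2 = ∑ ℓ, ‖h₂ ℓ‖ ^ 2)
    (hip : ‖∑ ℓ, h₂ ℓ * (starRingEnd ℂ) (a ℓ)‖ ≤ ‖∑ ℓ, h₁ ℓ * (starRingEnd ℂ) (a ℓ)‖) :
    (⨅ α : ℂ, effNoise ρ h₁ a α) ≤ (⨅ α : ℂ, effNoise ρ h₂ a α) ∧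
    (⨆ α : ℂ, max (Real.log (ρ / effNoise ρ h₁ a α)) 0) ≥
      (⨆ α : ℂ, max (Real.log (ρ / effNoise ρ h₂ a α)) 0) := by
  have hbound := div_le_effNoise hρ.le h₁ a
  have hexists := exists_effNoise_le hρ.le hnorm hip
  refine ⟨ciInf_mono_of_forall_exists ⟨_, Set.forall_mem_range.2 hbound⟩ hexists, ?_⟩
  rcases eq_or_ne a 0 with rfl | ha
  · have heq : effNoise ρ h₁ 0 = effNoise ρ h₂ 0 := funext fun α => by simp [effNoise_eq, hnorm]
    rw [heq]
  · obtain ⟨ℓ, hℓ⟩ := Function.ne_iff.1 ha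
    have hA : 0 < ∑ ℓ, ‖a ℓ‖ ^ 2 :=
      sum_pos' (fun _ _ => by positivity) ⟨ℓ, mem_univ ℓ, pow_pos (norm_pos_iff.2 hℓ) 2⟩
    have hc : 0 < ρ * (∑ ℓ, ‖a ℓ‖ ^ 2) / (ρ * ∑ ℓ, ‖h₁ ℓ‖ ^ 2 + 1) := by positivity
    exact ciSup_comp_le_ciSup_comp_of_antitoneOn
      ((antitoneOn_max_log_div hρ).mono (Set.Ici_subset_Ioi.2 hc)) hbound hexists

/-- if `‖h₁‖ = ‖h₂‖` and `|⟨h₁,a⟩| ≥ |⟨h₂,a⟩|`, then the minimal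
effective-noise energy for `h₁` is at most that for `h₂`, and consequently the
computation rate for `h₁` is at least that for `h₂`. -/
theorem rate_mono_of_inner_ge (L : ℕ) (hL : 1 ≤ L) (ρ : ℝ) (hρ : 0 < ρ)
    (h₁ h₂ a : Fin L → ℂ)
    (hnorm : ∑ ℓ, ‖h₁ ℓ‖ ^ 2 = ∑ ℓ, ‖h₂ ℓ‖ ^ 2)
    (hip : ‖∑ ℓ, h₂ ℓ * (starRingEnd ℂ) (a ℓ)‖ ≤ ‖∑ ℓ, h₁ ℓ * (starRingEnd ℂ) (a ℓ)‖) :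
    (⨅ α : ℂ, effNoise ρ h₁ a α) ≤ (⨅ α : ℂ, effNoise ρ h₂ a α) ∧
    (⨆ α : ℂ, max (Real.log (ρ / effNoise ρ h₁ a α)) 0) ≥
      (⨆ α : ℂ, max (Real.log (ρ / effNoise ρ h₂ a α)) 0) :=
  rate_mono_of_inner_ge_general L ρ hρ h₁ h₂ a hnorm hip
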